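/- For every N≥1 and every π∈S^M, V₀(π) ≤ V^N(π) ≤ V₀(π) + (‖h‖²/c + ‖h‖/p)·(1/N), where ‖h‖ = sup_{π∈S^M}|h(π)|; in particular V^N converges to V₀ uniformly on S^M as N→∞. -/

import Mathlib

open MeasureTheory Finset Filter
open scoped ENNReal

noncomputable section

/-- The analytic data of the change-diagnosis problem: a σ-finite reference measure `m`
on the observation space, probability densities `f₀, …, f_M`, the geometric parameter
`p ∈ (0,1)`, the prior `ν` on the change index, the delay cost `c > 0` and the
terminal-decision costs `a_{ij}` (with `a_{ii} = 0`). -/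
structure DiagSetup (E : Type*) [MeasurableSpace E] (M : ℕ) : Type _ where
  /-- σ-finite reference measure -/
  m : Measure E
  hm : SigmaFinite m
  /-- `f 0` is the pre-change density, `f i.succ` the post-change densities -/
  f : Fin (M + 1) → E → ℝ
  hf_meas : ∀ i, Measurable (f i)
  hf_nonneg : ∀ i x, 0 ≤ f i x
  hf_int : ∀ i, ∫ x, f i x ∂m = 1
  p : ℝ
  hp : p ∈ Set.Ioo (0 : ℝ) 1
  ν : Fin M → ℝ
  hν : ∀ i, 0 < ν i
  hνsum : ∑ i, ν i = 1
  c : ℝ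
  hc : 0 < c
  a : Fin (M + 1) → Fin M → ℝ
  ha : ∀ i j, 0 ≤ a i j
  haii : ∀ i : Fin M, a i.succ i = 0
  hM : 1 ≤ M

namespace DiagSetup

variable {E : Type*} [MeasurableSpace E] {M : ℕ}

/-- `D_i(π, x)`:  `D₀(π,x) = (1-p)π₀f₀(x)` and `D_i(π,x) = (π_i + π₀ p ν_i) f_i(x)`. -/
def D (S : DiagSetup E M) (i : Fin (M + 1)) (π : Fin (M + 1) → ℝ) (x : E) : ℝ :=
  Fin.cases ((1 - S.p) * π 0 * S.f 0 x)
    (fun j => (π j.succ + π 0 * S.p * S.ν j) * S.f j.succ x) i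

/-- `D(π, x) = Σ_{i=0}^M D_i(π, x)`. -/
def Dsum (S : DiagSetup E M) (π : Fin (M + 1) → ℝ) (x : E) : ℝ :=
  ∑ i, S.D i π x

/-- The operator `T`:
`(Tg)(π) = ∫_E D(π,x) g(D₀(π,x)/D(π,x), …, D_M(π,x)/D(π,x)) m(dx)`,
with the integrand interpreted as `0` where `D(π,x) = 0`. -/
def T (S : DiagSetup E M) (g : (Fin (M + 1) → ℝ) → ℝ) (π : Fin (M + 1) → ℝ) : ℝ :=
  ∫ x, (if S.Dsum π x = 0 then 0
        else S.Dsum π x * g fun i => S.D i π x / S.Dsum π x) ∂S.m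

/-- `h_j(π) = Σ_{i=0}^M π_i a_{ij}`. -/
def hj (S : DiagSetup E M) (j : Fin M) (π : Fin (M + 1) → ℝ) : ℝ :=
  ∑ i : Fin (M + 1), π i * S.a i j

/-- `h(π) = min_{j∈{1,…,M}} h_j(π)`. -/
def hmin (S : DiagSetup E M) (π : Fin (M + 1) → ℝ) : ℝ :=
  ⨅ j : Fin M, S.hj j π

/-- The dynamic-programming operator `(𝕄g)(π) = min{h(π), c(1-π₀) + (Tg)(π)}`. -/
def Mop (S : DiagSetup E M) (g : (Fin (M + 1) → ℝ) → ℝ) (π : Fin (M + 1) → ℝ) : ℝ :=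
  min (S.hmin π) (S.c * (1 - π 0) + S.T g π)

/-- `V^N = 𝕄^N h`, the value functions of the truncated problems. -/
def V (S : DiagSetup E M) (N : ℕ) : (Fin (M + 1) → ℝ) → ℝ :=
  S.Mop^[N] S.hmin

end DiagSetup

/-!
`T g π = ∫ g d(transition π)`, where `transition π` is the law of the posterior after one
observation: a probability measure carried by the simplex. Hence `T` is a positive linear operator
fixing constants, with `T (π ↦ π₀) = (1 - p) π₀`.

Let `τ_m` be the optimal stopping rule of horizon `m`. Running the rule of horizon `N + n` but
stopping at step `N` at the latest shows `V^N ≤ V^(N+n) + ‖h‖ P(τ_(N+n) ≥ N)`. By Markov's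
inequality `N P(τ ≥ N) ≤ E τ`, and `E τ` splits into the expected number of steps taken after
the change, at most `V^(N+n)/c ≤ ‖h‖/c` since each costs `c`, and the expected number taken
before it, at most `1/p` since the change time is geometric. Letting `n → ∞` gives the upper
bound; the lower one is the monotonicity of `V^N`. All probabilities and expectations here are
functions of the prior, defined by recursions through `T` restricted to the continuation sets.
-/

def BoundedMeasurableOn {α : Type*} [MeasurableSpace α] (s : Set α) (g : α → ℝ) : Prop :=
  Measurable g ∧ ∃ C, ∀ x ∈ s, |g x| ≤ C

namespace BoundedMeasurableOn

variable {α : Type*} [MeasurableSpace α] {s : Set α} {g g₁ g₂ : α → ℝ}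

lemma const (s : Set α) (r : ℝ) : BoundedMeasurableOn s fun _ => r :=
  ⟨measurable_const, |r|, fun _ _ => le_rfl⟩

lemma add (h₁ : BoundedMeasurableOn s g₁) (h₂ : BoundedMeasurableOn s g₂) :
    BoundedMeasurableOn s (g₁ + g₂) := by
  obtain ⟨hm₁, C₁, hC₁⟩ := h₁
  obtain ⟨hm₂, C₂, hC₂⟩ := h₂
  exact ⟨hm₁.add hm₂, C₁ + C₂, fun x hx =>
    (abs_add_le _ _).trans (add_le_add (hC₁ x hx) (hC₂ x hx))⟩

lemma sub (h₁ : BoundedMeasurableOn s g₁) (h₂ : BoundedMeasurableOn s g₂) :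
    BoundedMeasurableOn s (g₁ - g₂) := by
  obtain ⟨hm₁, C₁, hC₁⟩ := h₁
  obtain ⟨hm₂, C₂, hC₂⟩ := h₂
  exact ⟨hm₁.sub hm₂, C₁ + C₂, fun x hx =>
    (abs_sub _ _).trans (add_le_add (hC₁ x hx) (hC₂ x hx))⟩

lemma const_mul (h : BoundedMeasurableOn s g) (r : ℝ) : BoundedMeasurableOn s fun x => r * g x := by
  obtain ⟨hm, C, hC⟩ := h
  refine ⟨measurable_const.mul hm, |r| * C, fun x hx => ?_⟩
  rw [abs_mul]
  exact mul_le_mul_of_nonneg_left (hC x hx) (abs_nonneg r)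

lemma indicator (h : BoundedMeasurableOn s g) {t : Set α} (ht : MeasurableSet t) :
    BoundedMeasurableOn s (t.indicator g) := by
  obtain ⟨hm, C, hC⟩ := h
  refine ⟨hm.indicator ht, C, fun x hx => ?_⟩
  by_cases hxt : x ∈ t
  · simpa [hxt] using hC x hx
  · simpa [hxt] using (abs_nonneg _).trans (hC x hx)

end BoundedMeasurableOn

lemma tendstoUniformlyOn_of_dist_le {ι α β : Type*} [PseudoMetricSpace β] {l : Filter ι}
    {F : ι → α → β} {f : α → β} {s : Set α} {b : ι → ℝ} (hb : Tendsto b l (nhds 0))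
    (h : ∀ᶠ i in l, ∀ x ∈ s, dist (f x) (F i x) ≤ b i) : TendstoUniformlyOn F f l s :=
  Metric.tendstoUniformlyOn_iff.2 fun _ hε =>
    (h.and (hb.eventually (gt_mem_nhds hε))).mono fun _ hi x hx => (hi.1 x hx).trans_lt hi.2

namespace DiagSetup

variable {E : Type*} [MeasurableSpace E] {M : ℕ} (S : DiagSetup E M)

local notation "Δ" => stdSimplex ℝ (Fin (M + 1))

instance : SigmaFinite S.m := S.hm

lemma boundedMeasurableOn_apply (i : Fin (M + 1)) : BoundedMeasurableOn Δ fun y => y i :=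
  ⟨measurable_pi_apply i, 1, fun _ hy => by
    obtain ⟨h₀, h₁⟩ := mem_Icc_of_mem_stdSimplex hy i
    exact abs_le.2 ⟨by linarith, h₁⟩⟩

lemma integrable_f (i : Fin (M + 1)) : Integrable (S.f i) S.m :=
  Integrable.of_integral_ne_zero (by rw [S.hf_int i]; exact one_ne_zero)

lemma D_succ (j : Fin M) (π : Fin (M + 1) → ℝ) (x : E) :
    S.D j.succ π x = (π j.succ + π 0 * S.p * S.ν j) * S.f j.succ x := by
  simp [D]

lemma D_nonneg {π : Fin (M + 1) → ℝ} (hπ : π ∈ Δ) (i : Fin (M + 1)) (x : E) :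
    0 ≤ S.D i π x := by
  induction i using Fin.cases with
  | zero => exact mul_nonneg (mul_nonneg (by linarith [S.hp.2]) (hπ.1 0)) (S.hf_nonneg 0 x)
  | succ j =>
    rw [D_succ]
    exact mul_nonneg (add_nonneg (hπ.1 _) (mul_nonneg (mul_nonneg (hπ.1 0) S.hp.1.le) (S.hν j).le))
      (S.hf_nonneg _ x)

lemma Dsum_nonneg {π : Fin (M + 1) → ℝ} (hπ : π ∈ Δ) (x : E) : 0 ≤ S.Dsum π x :=
  Finset.sum_nonneg fun i _ => S.D_nonneg hπ i x

lemma measurable_uncurry_D (i : Fin (M + 1)) : Measurable (Function.uncurry (S.D i)) := by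
  have := S.hf_meas
  induction i using Fin.cases with
  | zero => unfold D; simp only [Function.uncurry_def, Fin.cases_zero]; fun_prop
  | succ j => unfold D; simp only [Function.uncurry_def, Fin.cases_succ]; fun_prop

lemma measurable_uncurry_Dsum : Measurable (Function.uncurry S.Dsum) := by
  simpa [Function.uncurry_def, Dsum] using
    Finset.measurable_sum Finset.univ fun i _ => S.measurable_uncurry_D i

lemma integrable_D (i : Fin (M + 1)) (π : Fin (M + 1) → ℝ) : Integrable (S.D i π) S.m := by
  induction i using Fin.cases with
  | zero => exact (S.integrable_f 0).const_mul ((1 - S.p) * π 0)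
  | succ j =>
    convert (S.integrable_f j.succ).const_mul (π j.succ + π 0 * S.p * S.ν j) using 1
    exact funext (S.D_succ j π)

lemma integral_D_zero (π : Fin (M + 1) → ℝ) : ∫ x, S.D 0 π x ∂S.m = (1 - S.p) * π 0 := by
  simp only [D, Fin.cases_zero]
  rw [integral_const_mul, S.hf_int 0, mul_one]

lemma integrable_Dsum (π : Fin (M + 1) → ℝ) : Integrable (S.Dsum π) S.m := by
  change Integrable (fun x => ∑ i, S.D i π x) S.m
  exact integrable_finsetSum Finset.univ fun i _ => S.integrable_D i π

lemma integral_Dsum {π : Fin (M + 1) → ℝ} (hπ : π ∈ Δ) : ∫ x, S.Dsum π x ∂S.m = 1 := by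
  have hπsum := hπ.2
  rw [Fin.sum_univ_succ] at hπsum
  simp only [Dsum]
  rw [integral_finsetSum _ fun i _ => S.integrable_D i π, Fin.sum_univ_succ, integral_D_zero]
  simp only [D_succ, integral_const_mul, S.hf_int, mul_one, Finset.sum_add_distrib,
    ← Finset.mul_sum, S.hνsum]
  linarith

def posterior (π : Fin (M + 1) → ℝ) (x : E) : Fin (M + 1) → ℝ :=
  fun i => S.D i π x / S.Dsum π x

lemma measurable_uncurry_posterior : Measurable (Function.uncurry S.posterior) :=
  measurable_pi_lambda _ fun i => (S.measurable_uncurry_D i).div S.measurable_uncurry_Dsum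

lemma measurable_posterior (π : Fin (M + 1) → ℝ) : Measurable (S.posterior π) :=
  S.measurable_uncurry_posterior.comp measurable_prodMk_left

lemma measurable_Dsum (π : Fin (M + 1) → ℝ) : Measurable (S.Dsum π) :=
  S.measurable_uncurry_Dsum.comp measurable_prodMk_left

lemma posterior_mem {π : Fin (M + 1) → ℝ} (hπ : π ∈ Δ) {x : E} (hx : S.Dsum π x ≠ 0) :
    S.posterior π x ∈ Δ :=
  ⟨fun i => div_nonneg (S.D_nonneg hπ i x) (S.Dsum_nonneg hπ x), by
    change ∑ i, S.D i π x / S.Dsum π x = 1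
    rw [← Finset.sum_div]; exact div_self hx⟩

lemma T_eq_integral_mul (g : (Fin (M + 1) → ℝ) → ℝ) (π : Fin (M + 1) → ℝ) :
    S.T g π = ∫ x, S.Dsum π x * g (S.posterior π x) ∂S.m := by
  refine integral_congr_ae (Eventually.of_forall fun x => ?_)
  dsimp only
  split_ifs with h
  · simp [h]
  · rfl

lemma measurable_T {g : (Fin (M + 1) → ℝ) → ℝ} (hg : Measurable g) : Measurable (S.T g) := by
  simp_rw [funext (S.T_eq_integral_mul g)]
  refine StronglyMeasurable.measurable (StronglyMeasurable.integral_prod_right ?_)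
  exact (S.measurable_uncurry_Dsum.mul (hg.comp S.measurable_uncurry_posterior)).stronglyMeasurable

def transition (π : Fin (M + 1) → ℝ) : Measure (Fin (M + 1) → ℝ) :=
  (S.m.withDensity fun x => ENNReal.ofReal (S.Dsum π x)).map (S.posterior π)

lemma T_eq_integral_transition {π : Fin (M + 1) → ℝ} (hπ : π ∈ Δ)
    {g : (Fin (M + 1) → ℝ) → ℝ} (hg : Measurable g) :
    S.T g π = ∫ y, g y ∂S.transition π := by
  rw [transition, integral_map (S.measurable_posterior π).aemeasurable hg.aestronglyMeasurable,
    integral_withDensity_eq_integral_toReal_smul (S.measurable_Dsum π).ennreal_ofReal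
      (Eventually.of_forall fun _ => ENNReal.ofReal_lt_top), T_eq_integral_mul]
  simp_rw [ENNReal.toReal_ofReal (S.Dsum_nonneg hπ _), smul_eq_mul]

lemma isProbabilityMeasure_transition {π : Fin (M + 1) → ℝ} (hπ : π ∈ Δ) :
    IsProbabilityMeasure (S.transition π) := by
  have : IsProbabilityMeasure (S.m.withDensity fun x => ENNReal.ofReal (S.Dsum π x)) := by
    constructor
    rw [withDensity_apply _ MeasurableSet.univ, Measure.restrict_univ,
      ← ofReal_integral_eq_lintegral_ofReal (S.integrable_Dsum π)
        (Eventually.of_forall (S.Dsum_nonneg hπ)), S.integral_Dsum hπ, ENNReal.ofReal_one]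
  exact Measure.isProbabilityMeasure_map (S.measurable_posterior π).aemeasurable

lemma ae_mem_transition {π : Fin (M + 1) → ℝ} (hπ : π ∈ Δ) : ∀ᵐ y ∂S.transition π, y ∈ Δ := by
  rw [transition, ae_map_iff (p := (· ∈ Δ)) (S.measurable_posterior π).aemeasurable
      (isClosed_stdSimplex ℝ (Fin (M + 1))).measurableSet,
    ae_withDensity_iff (S.measurable_Dsum π).ennreal_ofReal]
  refine Eventually.of_forall fun x hx => S.posterior_mem hπ fun h => hx ?_
  rw [h, ENNReal.ofReal_zero]

lemma integrable_transition {π : Fin (M + 1) → ℝ} (hπ : π ∈ Δ) {g : (Fin (M + 1) → ℝ) → ℝ}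
    (hg : BoundedMeasurableOn Δ g) : Integrable g (S.transition π) := by
  have := S.isProbabilityMeasure_transition hπ
  obtain ⟨hm, C, hC⟩ := hg
  exact Integrable.of_bound hm.aestronglyMeasurable C ((S.ae_mem_transition hπ).mono hC)

lemma T_mono {π : Fin (M + 1) → ℝ} (hπ : π ∈ Δ) {g₁ g₂ : (Fin (M + 1) → ℝ) → ℝ}
    (hg₁ : BoundedMeasurableOn Δ g₁) (hg₂ : BoundedMeasurableOn Δ g₂)
    (h : ∀ y ∈ Δ, g₁ y ≤ g₂ y) : S.T g₁ π ≤ S.T g₂ π := by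
  rw [S.T_eq_integral_transition hπ hg₁.1, S.T_eq_integral_transition hπ hg₂.1]
  exact integral_mono_ae (S.integrable_transition hπ hg₁) (S.integrable_transition hπ hg₂)
    ((S.ae_mem_transition hπ).mono h)

lemma T_congr {π : Fin (M + 1) → ℝ} (hπ : π ∈ Δ) {g₁ g₂ : (Fin (M + 1) → ℝ) → ℝ}
    (hg₁ : Measurable g₁) (hg₂ : Measurable g₂) (h : ∀ y ∈ Δ, g₁ y = g₂ y) :
    S.T g₁ π = S.T g₂ π := by
  rw [S.T_eq_integral_transition hπ hg₁, S.T_eq_integral_transition hπ hg₂]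
  exact integral_congr_ae ((S.ae_mem_transition hπ).mono h)

lemma T_nonneg {π : Fin (M + 1) → ℝ} (hπ : π ∈ Δ) {g : (Fin (M + 1) → ℝ) → ℝ}
    (hg : Measurable g) (h : ∀ y ∈ Δ, 0 ≤ g y) : 0 ≤ S.T g π := by
  rw [S.T_eq_integral_transition hπ hg]
  exact integral_nonneg_of_ae ((S.ae_mem_transition hπ).mono h)

lemma abs_T_le {π : Fin (M + 1) → ℝ} (hπ : π ∈ Δ) {g : (Fin (M + 1) → ℝ) → ℝ}
    (hg : Measurable g) {C : ℝ} (h : ∀ y ∈ Δ, |g y| ≤ C) : |S.T g π| ≤ C := by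
  have := S.isProbabilityMeasure_transition hπ
  rw [S.T_eq_integral_transition hπ hg]
  simpa using norm_integral_le_of_norm_le_const
    ((S.ae_mem_transition hπ).mono fun y hy => (Real.norm_eq_abs _).trans_le (h y hy))

lemma T_add {π : Fin (M + 1) → ℝ} (hπ : π ∈ Δ) {g₁ g₂ : (Fin (M + 1) → ℝ) → ℝ}
    (hg₁ : BoundedMeasurableOn Δ g₁) (hg₂ : BoundedMeasurableOn Δ g₂) :
    S.T (g₁ + g₂) π = S.T g₁ π + S.T g₂ π := by
  rw [S.T_eq_integral_transition hπ (hg₁.1.add hg₂.1), S.T_eq_integral_transition hπ hg₁.1,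
    S.T_eq_integral_transition hπ hg₂.1]
  exact integral_add (S.integrable_transition hπ hg₁) (S.integrable_transition hπ hg₂)

lemma boundedMeasurableOn_T {g : (Fin (M + 1) → ℝ) → ℝ} (hg : BoundedMeasurableOn Δ g) :
    BoundedMeasurableOn Δ (S.T g) := by
  obtain ⟨hm, C, hC⟩ := hg
  exact ⟨S.measurable_T hm, C, fun _ hπ => S.abs_T_le hπ hm hC⟩

lemma T_const_mul (r : ℝ) (g : (Fin (M + 1) → ℝ) → ℝ) (π : Fin (M + 1) → ℝ) :
    S.T (fun y => r * g y) π = r * S.T g π := by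
  simp only [T_eq_integral_mul, ← integral_const_mul, mul_left_comm]

lemma T_const {π : Fin (M + 1) → ℝ} (hπ : π ∈ Δ) (r : ℝ) : S.T (fun _ => r) π = r := by
  have := S.isProbabilityMeasure_transition hπ
  simp [S.T_eq_integral_transition hπ measurable_const]

lemma T_apply_zero {π : Fin (M + 1) → ℝ} (hπ : π ∈ Δ) :
    S.T (fun y => y 0) π = (1 - S.p) * π 0 := by
  rw [T_eq_integral_mul, ← S.integral_D_zero]
  refine integral_congr_ae (Eventually.of_forall fun x => ?_)
  by_cases h : S.Dsum π x = 0
  · simp only [h, zero_mul]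
    exact ((Finset.sum_eq_zero_iff_of_nonneg fun i _ => S.D_nonneg hπ i x).1 h 0
      (Finset.mem_univ 0)).symm
  · exact mul_div_cancel₀ _ h

lemma measurable_hmin : Measurable S.hmin :=
  Measurable.iInf fun _ => Finset.measurable_sum _ fun i _ => (measurable_pi_apply i).mul_const _

lemma hmin_nonneg {π : Fin (M + 1) → ℝ} (hπ : π ∈ Δ) : 0 ≤ S.hmin π :=
  Real.iInf_nonneg fun j => Finset.sum_nonneg fun i _ => mul_nonneg (hπ.1 i) (S.ha i j)

lemma hmin_le_sum_a {π : Fin (M + 1) → ℝ} (hπ : π ∈ Δ) (j : Fin M) :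
    S.hmin π ≤ ∑ i, S.a i j := by
  refine (ciInf_le (Set.finite_range _).bddBelow j).trans (Finset.sum_le_sum fun i _ => ?_)
  exact mul_le_of_le_one_left (S.ha i j) (mem_Icc_of_mem_stdSimplex hπ i).2

def hnorm : ℝ := ⨆ π' : Δ, |S.hmin π'|

lemma abs_hmin_le_hnorm {π : Fin (M + 1) → ℝ} (hπ : π ∈ Δ) : |S.hmin π| ≤ S.hnorm := by
  refine le_ciSup (f := fun π' : Δ => |S.hmin π'|) ⟨∑ i, S.a i ⟨0, S.hM⟩, ?_⟩ ⟨π, hπ⟩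
  rintro _ ⟨π', rfl⟩
  change |S.hmin π'.1| ≤ _
  rw [abs_of_nonneg (S.hmin_nonneg π'.2)]
  exact S.hmin_le_sum_a π'.2 _

lemma hmin_le_hnorm {π : Fin (M + 1) → ℝ} (hπ : π ∈ Δ) : S.hmin π ≤ S.hnorm :=
  (le_abs_self _).trans (S.abs_hmin_le_hnorm hπ)

lemma hnorm_nonneg : 0 ≤ S.hnorm :=
  (abs_nonneg _).trans (S.abs_hmin_le_hnorm (single_mem_stdSimplex ℝ 0))

lemma V_succ_apply (N : ℕ) (π : Fin (M + 1) → ℝ) :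
    S.V (N + 1) π = min (S.hmin π) (S.c * (1 - π 0) + S.T (S.V N) π) := by
  rw [V, Function.iterate_succ_apply']
  rfl

lemma V_le_hmin (N : ℕ) (π : Fin (M + 1) → ℝ) : S.V N π ≤ S.hmin π := by
  cases N with
  | zero => exact le_rfl
  | succ N => exact (S.V_succ_apply N π).trans_le (min_le_left _ _)

lemma measurable_V (N : ℕ) : Measurable (S.V N) := by
  induction N with
  | zero => exact S.measurable_hmin
  | succ N ih =>
    rw [funext (S.V_succ_apply N)]
    have := S.measurable_T ih
    exact S.measurable_hmin.min (by fun_prop)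

lemma V_nonneg (N : ℕ) {π : Fin (M + 1) → ℝ} (hπ : π ∈ Δ) : 0 ≤ S.V N π := by
  induction N generalizing π with
  | zero => exact S.hmin_nonneg hπ
  | succ N ih =>
    rw [V_succ_apply]
    have : 0 ≤ 1 - π 0 := sub_nonneg.2 (mem_Icc_of_mem_stdSimplex hπ 0).2
    exact le_min (S.hmin_nonneg hπ) (add_nonneg (mul_nonneg S.hc.le this)
      (S.T_nonneg hπ (S.measurable_V N) fun _ => ih))

lemma boundedMeasurableOn_V (N : ℕ) : BoundedMeasurableOn Δ (S.V N) :=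
  ⟨S.measurable_V N, S.hnorm, fun _ hπ => by
    rw [abs_of_nonneg (S.V_nonneg N hπ)]; exact (S.V_le_hmin N _).trans (S.hmin_le_hnorm hπ)⟩

lemma V_succ_le_V (N : ℕ) {π : Fin (M + 1) → ℝ} (hπ : π ∈ Δ) : S.V (N + 1) π ≤ S.V N π := by
  induction N generalizing π with
  | zero => exact S.V_le_hmin 1 π
  | succ N ih =>
    rw [V_succ_apply, S.V_succ_apply N]
    gcongr
    exact S.T_mono hπ (S.boundedMeasurableOn_V _) (S.boundedMeasurableOn_V _) fun _ => ih

lemma antitone_V_apply {π : Fin (M + 1) → ℝ} (hπ : π ∈ Δ) : Antitone fun N => S.V N π :=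
  antitone_nat_of_succ_le fun N => S.V_succ_le_V N hπ

def continuationSet (k : ℕ) : Set (Fin (M + 1) → ℝ) :=
  {π | S.c * (1 - π 0) + S.T (S.V k) π < S.hmin π}

lemma measurableSet_continuationSet (k : ℕ) : MeasurableSet (S.continuationSet k) := by
  have := S.measurable_T (S.measurable_V k)
  exact measurableSet_lt (by fun_prop) S.measurable_hmin

lemma V_succ_of_mem {k : ℕ} {π : Fin (M + 1) → ℝ} (h : π ∈ S.continuationSet k) :
    S.V (k + 1) π = S.c * (1 - π 0) + S.T (S.V k) π := by
  rw [V_succ_apply]; exact min_eq_right h.le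

lemma V_succ_of_notMem {k : ℕ} {π : Fin (M + 1) → ℝ} (h : π ∉ S.continuationSet k) :
    S.V (k + 1) π = S.hmin π := by
  rw [V_succ_apply]; exact min_eq_left (not_lt.1 h)

lemma V_succ_le (k : ℕ) (π : Fin (M + 1) → ℝ) :
    S.V (k + 1) π ≤ S.c * (1 - π 0) + S.T (S.V k) π := by
  rw [V_succ_apply]; exact min_le_right _ _

def killedT (k : ℕ) (g : (Fin (M + 1) → ℝ) → ℝ) : (Fin (M + 1) → ℝ) → ℝ :=
  (S.continuationSet k).indicator (S.T g)

lemma boundedMeasurableOn_killedT (k : ℕ) {g : (Fin (M + 1) → ℝ) → ℝ}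
    (hg : BoundedMeasurableOn Δ g) : BoundedMeasurableOn Δ (S.killedT k g) :=
  (S.boundedMeasurableOn_T hg).indicator (S.measurableSet_continuationSet k)

lemma killedT_mono (k : ℕ) {π : Fin (M + 1) → ℝ} (hπ : π ∈ Δ) {g₁ g₂ : (Fin (M + 1) → ℝ) → ℝ}
    (hg₁ : BoundedMeasurableOn Δ g₁) (hg₂ : BoundedMeasurableOn Δ g₂)
    (h : ∀ y ∈ Δ, g₁ y ≤ g₂ y) : S.killedT k g₁ π ≤ S.killedT k g₂ π :=
  Set.indicator_le_indicator (S.T_mono hπ hg₁ hg₂ h)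

/-- `P_π(τ_m ≥ s)`, for the optimal stopping rule `τ_m` of horizon `m`. -/
def survivalProb : ℕ → ℕ → (Fin (M + 1) → ℝ) → ℝ
  | _, 0 => fun _ => 1
  | 0, _ + 1 => fun _ => 0
  | m + 1, s + 1 => S.killedT m (survivalProb m s)

lemma boundedMeasurableOn_survivalProb (m s : ℕ) : BoundedMeasurableOn Δ (S.survivalProb m s) := by
  induction m generalizing s with
  | zero => cases s <;> exact BoundedMeasurableOn.const _ _
  | succ m ih =>
    cases s with
    | zero => exact BoundedMeasurableOn.const _ _
    | succ s => exact S.boundedMeasurableOn_killedT m (ih s)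

lemma survivalProb_le_one (m s : ℕ) {π : Fin (M + 1) → ℝ} (hπ : π ∈ Δ) :
    S.survivalProb m s π ≤ 1 := by
  induction m generalizing s π with
  | zero => cases s <;> simp [survivalProb]
  | succ m ih =>
    cases s with
    | zero => exact le_rfl
    | succ s =>
      refine (S.killedT_mono m hπ (S.boundedMeasurableOn_survivalProb m s)
        (BoundedMeasurableOn.const _ 1) fun y hy => ih s hy).trans ?_
      by_cases h : π ∈ S.continuationSet m <;> simp [killedT, h, S.T_const hπ]

lemma survivalProb_nonneg (m s : ℕ) {π : Fin (M + 1) → ℝ} (hπ : π ∈ Δ) :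
    0 ≤ S.survivalProb m s π := by
  induction m generalizing s π with
  | zero => cases s <;> simp [survivalProb]
  | succ m ih =>
    cases s with
    | zero => exact zero_le_one
    | succ s => exact Set.indicator_nonneg (fun _ _ => S.T_nonneg hπ
        (S.boundedMeasurableOn_survivalProb m s).1 fun _ => ih s) π

/-- `E_π[∑_{t < τ_m} r(π_t)]`, for the optimal stopping rule `τ_m` of horizon `m` and the
posterior process `(π_t)`. -/
def accumulated (r : (Fin (M + 1) → ℝ) → ℝ) : ℕ → (Fin (M + 1) → ℝ) → ℝ
  | 0 => fun _ => 0
  | m + 1 => (S.continuationSet m).indicator r + S.killedT m (accumulated r m)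

variable {S} {r r₁ r₂ : (Fin (M + 1) → ℝ) → ℝ}

lemma boundedMeasurableOn_accumulated (hr : BoundedMeasurableOn Δ r) (m : ℕ) :
    BoundedMeasurableOn Δ (S.accumulated r m) := by
  induction m with
  | zero => exact BoundedMeasurableOn.const _ _
  | succ m ih =>
    exact (hr.indicator (S.measurableSet_continuationSet m)).add
      (S.boundedMeasurableOn_killedT m ih)

lemma accumulated_nonneg (hr : BoundedMeasurableOn Δ r) (hr₀ : ∀ y ∈ Δ, 0 ≤ r y) (m : ℕ)
    {π : Fin (M + 1) → ℝ} (hπ : π ∈ Δ) : 0 ≤ S.accumulated r m π := by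
  induction m generalizing π with
  | zero => exact le_rfl
  | succ m ih =>
    exact add_nonneg (Set.indicator_nonneg (fun _ _ => hr₀ π hπ) π) (Set.indicator_nonneg
      (fun _ _ => S.T_nonneg hπ (boundedMeasurableOn_accumulated hr m).1 fun _ => ih) π)

lemma accumulated_add (hr₁ : BoundedMeasurableOn Δ r₁) (hr₂ : BoundedMeasurableOn Δ r₂) (m : ℕ)
    {π : Fin (M + 1) → ℝ} (hπ : π ∈ Δ) :
    S.accumulated (r₁ + r₂) m π = S.accumulated r₁ m π + S.accumulated r₂ m π := by
  induction m generalizing π with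
  | zero => simp [accumulated]
  | succ m ih =>
    have hT : S.T (S.accumulated (r₁ + r₂) m) π
        = S.T (S.accumulated r₁ m) π + S.T (S.accumulated r₂ m) π := by
      rw [S.T_congr hπ (boundedMeasurableOn_accumulated (hr₁.add hr₂) m).1
          ((boundedMeasurableOn_accumulated hr₁ m).1.add (boundedMeasurableOn_accumulated hr₂ m).1)
          fun _ => ih,
        S.T_add hπ (boundedMeasurableOn_accumulated hr₁ m) (boundedMeasurableOn_accumulated hr₂ m)]
    by_cases h : π ∈ S.continuationSet m
    · simp only [accumulated, killedT, Pi.add_apply, Set.indicator_of_mem h, hT]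
      ring
    · simp [accumulated, killedT, h]

variable (S)

lemma mul_accumulated_le_V (m : ℕ) {π : Fin (M + 1) → ℝ} (hπ : π ∈ Δ) :
    S.c * S.accumulated (fun y => 1 - y 0) m π ≤ S.V m π := by
  induction m generalizing π with
  | zero => simpa [accumulated] using S.V_nonneg 0 hπ
  | succ m ih =>
    have hr : BoundedMeasurableOn Δ fun y => 1 - y 0 :=
      (BoundedMeasurableOn.const Δ 1).sub (boundedMeasurableOn_apply 0)
    by_cases h : π ∈ S.continuationSet m
    · rw [S.V_succ_of_mem h]
      simp only [accumulated, killedT, Pi.add_apply, Set.indicator_of_mem h, mul_add,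
        ← T_const_mul]
      gcongr
      exact S.T_mono hπ ((boundedMeasurableOn_accumulated hr m).const_mul _)
        (S.boundedMeasurableOn_V m) fun _ => ih
    · simpa [accumulated, killedT, h, S.V_succ_of_notMem h] using S.hmin_nonneg hπ

lemma accumulated_apply_zero_le (m : ℕ) {π : Fin (M + 1) → ℝ} (hπ : π ∈ Δ) :
    S.accumulated (fun y => y 0) m π ≤ π 0 / S.p := by
  have hp := S.hp.1
  have hπ₀ := (mem_Icc_of_mem_stdSimplex hπ 0).1
  induction m generalizing π with
  | zero => simpa [accumulated] using div_nonneg hπ₀ hp.le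
  | succ m ih =>
    by_cases h : π ∈ S.continuationSet m
    · have hT : S.T (S.accumulated (fun y => y 0) m) π ≤ S.p⁻¹ * ((1 - S.p) * π 0) := by
        rw [← S.T_apply_zero hπ, ← T_const_mul]
        exact S.T_mono hπ (boundedMeasurableOn_accumulated (boundedMeasurableOn_apply 0) m)
          ((boundedMeasurableOn_apply 0).const_mul _) fun y hy => by
            simpa [div_eq_inv_mul] using ih hy (mem_Icc_of_mem_stdSimplex hy 0).1
      simp only [accumulated, killedT, Pi.add_apply, Set.indicator_of_mem h]
      calc π 0 + S.T (S.accumulated (fun y => y 0) m) π ≤ π 0 + S.p⁻¹ * ((1 - S.p) * π 0) := by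
            gcongr
        _ = π 0 / S.p := by field_simp; ring
    · simpa [accumulated, killedT, h] using div_nonneg hπ₀ hp.le

lemma accumulated_one_le (m : ℕ) {π : Fin (M + 1) → ℝ} (hπ : π ∈ Δ) :
    S.accumulated (fun _ => 1) m π ≤ S.hnorm / S.c + 1 / S.p := by
  have hsplit : (fun _ => (1 : ℝ)) = (fun y : Fin (M + 1) → ℝ => 1 - y 0) + fun y => y 0 := by
    funext y; simp
  have hdelay : S.accumulated (fun y => 1 - y 0) m π ≤ S.hnorm / S.c := by
    rw [le_div_iff₀ S.hc, mul_comm]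
    exact (S.mul_accumulated_le_V m hπ).trans
      ((S.V_le_hmin m π).trans (S.hmin_le_hnorm hπ))
  have hpre : S.accumulated (fun y => y 0) m π ≤ 1 / S.p :=
    (S.accumulated_apply_zero_le m hπ).trans
      (div_le_div_of_nonneg_right (mem_Icc_of_mem_stdSimplex hπ 0).2 S.hp.1.le)
  have hr : BoundedMeasurableOn Δ fun y => 1 - y 0 :=
    (BoundedMeasurableOn.const Δ 1).sub (boundedMeasurableOn_apply 0)
  rw [hsplit, accumulated_add hr (boundedMeasurableOn_apply 0) m hπ]
  exact add_le_add hdelay hpre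

/-- Markov's inequality `s P(τ_m ≥ s) ≤ E τ_m`. -/
lemma natCast_mul_survivalProb_le (m s : ℕ) {π : Fin (M + 1) → ℝ} (hπ : π ∈ Δ) :
    s * S.survivalProb m s π ≤ S.accumulated (fun _ => 1) m π := by
  induction m generalizing s π with
  | zero => cases s <;> simp [survivalProb, accumulated]
  | succ m ih =>
    cases s with
    | zero => simpa using
        accumulated_nonneg (BoundedMeasurableOn.const Δ 1) (fun _ _ => zero_le_one) (m + 1) hπ
    | succ s =>
      by_cases h : π ∈ S.continuationSet m
      · have hH := S.boundedMeasurableOn_survivalProb m s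
        have hTH : S.T (S.survivalProb m s) π ≤ 1 := by
          simpa [S.T_const hπ] using S.T_mono hπ hH (BoundedMeasurableOn.const Δ 1)
            fun _ hy => S.survivalProb_le_one m s hy
        have hTsH : S.T (fun y => s * S.survivalProb m s y) π
            ≤ S.T (S.accumulated (fun _ => 1) m) π :=
          S.T_mono hπ (hH.const_mul _)
            (boundedMeasurableOn_accumulated (BoundedMeasurableOn.const Δ 1) m) fun _ hy => ih s hy
        simp only [survivalProb, accumulated, killedT, Pi.add_apply, Set.indicator_of_mem h]
        rw [T_const_mul] at hTsH
        push_cast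
        linarith
      · simp [survivalProb, accumulated, killedT, h]

/-- Following the horizon-`(k + n)` rule for only `k` steps costs at most `‖h‖` extra, and only on
the event that it is still running at time `k`. -/
lemma V_le_V_add_mul_survivalProb (n k : ℕ) {π : Fin (M + 1) → ℝ} (hπ : π ∈ Δ) :
    S.V k π ≤ S.V (k + n) π + S.hnorm * S.survivalProb (k + n) k π := by
  induction k generalizing π with
  | zero =>
    simpa [survivalProb] using
      add_le_add (S.V_nonneg n hπ) ((S.V_le_hmin 0 π).trans (S.hmin_le_hnorm hπ))
  | succ k ih =>
    rw [show k + 1 + n = k + n + 1 by omega]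
    by_cases h : π ∈ S.continuationSet (k + n)
    · have hH := S.boundedMeasurableOn_survivalProb (k + n) k
      have hT : S.T (S.V k) π
          ≤ S.T (S.V (k + n)) π + S.hnorm * S.T (S.survivalProb (k + n) k) π := by
        rw [← T_const_mul, ← S.T_add hπ (S.boundedMeasurableOn_V _) (hH.const_mul _)]
        exact S.T_mono hπ (S.boundedMeasurableOn_V k)
          ((S.boundedMeasurableOn_V _).add (hH.const_mul _)) fun _ => ih
      simp only [S.V_succ_of_mem h, survivalProb, killedT, Set.indicator_of_mem h]
      linarith [S.V_succ_le k π]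
    · rw [S.V_succ_of_notMem h]
      nlinarith [S.V_le_hmin (k + 1) π, S.hnorm_nonneg,
        S.survivalProb_nonneg (k + n + 1) (k + 1) hπ]

lemma V_le_V_add {N N' : ℕ} (hN : 1 ≤ N) (hNN' : N ≤ N') {π : Fin (M + 1) → ℝ} (hπ : π ∈ Δ) :
    S.V N π ≤ S.V N' π + (S.hnorm ^ 2 / S.c + S.hnorm / S.p) * (1 / N) := by
  obtain ⟨n, rfl⟩ := Nat.exists_eq_add_of_le hNN'
  have hN' : (0 : ℝ) < N := by exact_mod_cast hN
  have hH : S.survivalProb (N + n) N π ≤ (S.hnorm / S.c + 1 / S.p) / N := by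
    rw [le_div_iff₀ hN', mul_comm]
    exact (S.natCast_mul_survivalProb_le _ N hπ).trans (S.accumulated_one_le _ hπ)
  calc S.V N π ≤ S.V (N + n) π + S.hnorm * S.survivalProb (N + n) N π :=
        S.V_le_V_add_mul_survivalProb n N hπ
    _ ≤ S.V (N + n) π + S.hnorm * ((S.hnorm / S.c + 1 / S.p) / N) := by
        gcongr; exact S.hnorm_nonneg
    _ = S.V (N + n) π + (S.hnorm ^ 2 / S.c + S.hnorm / S.p) * (1 / N) := by ring

end DiagSetup

/-- for every `N ≥ 1` and `π ∈ S^M`,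
`V₀(π) ≤ V^N(π) ≤ V₀(π) + (‖h‖²/c + ‖h‖/p)/N`, where `‖h‖ = sup_{π∈S^M} |h(π)|`;
in particular `V^N → V₀` uniformly on `S^M`. -/
theorem truncation_error_bound {E : Type*} [MeasurableSpace E] {M : ℕ}
    (S : DiagSetup E M) (V0 : (Fin (M + 1) → ℝ) → ℝ)
    (hV0 : ∀ π ∈ stdSimplex ℝ (Fin (M + 1)),
      Tendsto (fun N => S.V N π) atTop (nhds (V0 π))) :
    (∀ N : ℕ, 1 ≤ N → ∀ π ∈ stdSimplex ℝ (Fin (M + 1)),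
      V0 π ≤ S.V N π ∧
      S.V N π ≤ V0 π
        + ((⨆ π' : stdSimplex ℝ (Fin (M + 1)), |S.hmin π'|) ^ 2 / S.c
            + (⨆ π' : stdSimplex ℝ (Fin (M + 1)), |S.hmin π'|) / S.p) * (1 / N)) ∧
    TendstoUniformlyOn (fun N => S.V N) V0 atTop (stdSimplex ℝ (Fin (M + 1))) := by
  set K := S.hnorm ^ 2 / S.c + S.hnorm / S.p
  have bounds : ∀ N : ℕ, 1 ≤ N → ∀ π ∈ stdSimplex ℝ (Fin (M + 1)),
      V0 π ≤ S.V N π ∧ S.V N π ≤ V0 π + K * (1 / N) := fun N hN π hπ =>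
    ⟨(S.antitone_V_apply hπ).le_of_tendsto (hV0 π hπ) N,
      ge_of_tendsto ((hV0 π hπ).add_const _)
        (eventually_atTop.2 ⟨N, fun _ hN' => S.V_le_V_add hN hN' hπ⟩)⟩
  refine ⟨bounds, tendstoUniformlyOn_of_dist_le (b := fun N : ℕ => K * (1 / N))
    (by simpa [div_eq_mul_inv] using tendsto_const_div_atTop_nhds_zero_nat K) ?_⟩
  filter_upwards [eventually_ge_atTop 1] with N hN π hπ
  obtain ⟨hlow, hup⟩ := bounds N hN π hπ
  rw [Real.dist_eq, abs_sub_comm, abs_of_nonneg (sub_nonneg.2 hlow)]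
  linarith
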